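/- arXiv:2006.05186 — 2 statements merged into one kernel-verified Lean document; each statement's English description precedes it below -/
import Mathlib

section
/- The multivariate adaptive cross approximation of a third-order tensor G ∈ ℂ^{m×n×p} coincides with the standard matrix adaptive cross approximation applied to the mode-3 unfolding M₃(G) ∈ ℂ^{p×(mn)}: the residual tensors R^(ℓ) of MACA satisfy M₃(R^(ℓ)) = the matrix residuals produced by ACA on M₃(G) with corresponding pivot rows k_ℓ and pivot columns (i_ℓ, j_ℓ). -/
/-- MACA coincides with standard matrix ACA applied to the mode-3 unfolding:
the mode-3 unfolding of the MACA residuals equals the matrix ACA residuals of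
the unfolded tensor, with pivot rows `kpiv ℓ` and pivot columns `(ipiv ℓ, jpiv ℓ)`. -/
theorem maca_is_aca_on_mode3_unfolding (m n p : ℕ)
    (G : Fin m → Fin n → Fin p → ℂ)
    (R : ℕ → Fin m → Fin n → Fin p → ℂ)
    (S : ℕ → Matrix (Fin p) (Fin m × Fin n) ℂ)
    (ipiv : ℕ → Fin m) (jpiv : ℕ → Fin n) (kpiv : ℕ → Fin p)
    (hR0 : R 0 = G)
    (hS0 : ∀ k i j, S 0 k (i, j) = G i j k)
    (hrecR : ∀ ℓ i j k, R (ℓ + 1) i j k =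
      R ℓ i j k - R ℓ i j (kpiv ℓ) * R ℓ (ipiv ℓ) (jpiv ℓ) k /
        R ℓ (ipiv ℓ) (jpiv ℓ) (kpiv ℓ))
    (hrecS : ∀ ℓ k c, S (ℓ + 1) k c =
      S ℓ k c - S ℓ k (ipiv ℓ, jpiv ℓ) * S ℓ (kpiv ℓ) c /
        S ℓ (kpiv ℓ) (ipiv ℓ, jpiv ℓ)) :
    ∀ ℓ i j k, S ℓ k (i, j) = R ℓ i j k := by
  intro ℓ
  induction ℓ with
  | zero => intro i j k; rw [hS0, hR0]
  | succ ℓ ih =>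
    intro i j k
    rw [hrecS, hrecR]; simp only [ih]
    ring
end

section
/- Let A ∈ ℂ^{p×q} be a matrix whose rows are samples A[k,·] = m(θ_k) of a vector-valued function m: [−1,1] → ℂ^q at points θ_k ∈ [−1,1], and suppose each component function m_j admits a polynomial approximation of degree ℓ with uniform error at most ε on [−1,1]. Then there exists a matrix B of rank at most ℓ+1 with max-entry error ‖A − B‖_max ≤ ε, and hence ‖A − B‖_F ≤ ε·√(pq). -/
/-!
Replacing each `m j` by its approximating polynomial `q j` gives a matrix `B k j = q j (θ k)` that
is entrywise `ε`-close to `A`. Writing `q j = ∑_{i ≤ ℓ} c i j X^i` factors `B` as the `p × (ℓ+1)`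
Vandermonde-type matrix `θ k ^ i` times the coefficient matrix `c`, so `rank B ≤ ℓ + 1`; the
Frobenius bound follows from the entrywise one.
-/

open Finset Polynomial

theorem Matrix.of_eval_eq_pow_mul_coeff {R ι κ : Type*} [CommSemiring R] (x : ι → R)
    (P : κ → R[X]) {n : ℕ} (hP : ∀ j, (P j).natDegree < n) :
    Matrix.of (fun i j => (P j).eval (x i)) =
      Matrix.of (fun i (k : Fin n) => x i ^ (k : ℕ)) *
        Matrix.of fun (k : Fin n) j => (P j).coeff k := by
  ext i j
  rw [Matrix.of_apply, eval_eq_sum_range' (hP j), ← Fin.sum_univ_eq_sum_range]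
  simp only [Matrix.mul_apply, Matrix.of_apply, mul_comm]

theorem Matrix.rank_of_eval_le {R ι κ : Type*} [CommRing R] [StrongRankCondition R]
    [Fintype ι] [Fintype κ] (x : ι → R) (P : κ → R[X]) {ℓ : ℕ} (hP : ∀ j, (P j).degree ≤ ℓ) :
    (Matrix.of fun i j => (P j).eval (x i)).rank ≤ ℓ + 1 := by
  have hlt : ∀ j, (P j).natDegree < ℓ + 1 := fun j =>
    Nat.lt_succ_of_le (natDegree_le_iff_degree_le.mpr (hP j))
  rw [Matrix.of_eval_eq_pow_mul_coeff x P hlt]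
  exact (Matrix.rank_mul_le_left _ _).trans
    ((Matrix.rank_le_card_width _).trans (Fintype.card_fin _).le)

theorem Real.sqrt_sum_sum_norm_sq_le {ι κ E : Type*} [Fintype ι] [Fintype κ]
    [SeminormedAddCommGroup E] (M : ι → κ → E) {ε : ℝ} (hM : ∀ i j, ‖M i j‖ ≤ ε) :
    √(∑ i, ∑ j, ‖M i j‖ ^ 2) ≤ ε * √(Fintype.card ι * Fintype.card κ) := by
  rcases isEmpty_or_nonempty ι with hι | ⟨⟨i⟩⟩
  · simp
  rcases isEmpty_or_nonempty κ with hκ | ⟨⟨j⟩⟩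
  · simp
  have hε : 0 ≤ ε := (norm_nonneg _).trans (hM i j)
  calc √(∑ i, ∑ j, ‖M i j‖ ^ 2)
      ≤ √(∑ _i : ι, ∑ _j : κ, ε ^ 2) := by
        gcongr with i _ j _
        exact hM i j
    _ = ε * √(Fintype.card ι * Fintype.card κ) := by
        simp only [sum_const, card_univ, nsmul_eq_mul]
        rw [← mul_assoc, mul_comm, Real.sqrt_mul (by positivity), Real.sqrt_sq hε]

open Finset in
/-- A matrix of samples of functions that admit degree-`ℓ` polynomial
approximations with uniform error `ε` admits a rank-`(ℓ+1)` approximation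
with max-entry error `ε` and Frobenius error `ε·√(pq)`. -/
theorem sample_matrix_lowrank_approx (p q ℓ : ℕ)
    (θ : Fin p → ℝ) (hθ : ∀ k, θ k ∈ Set.Icc (-1 : ℝ) 1)
    (m : Fin q → ℝ → ℂ)
    (A : Matrix (Fin p) (Fin q) ℂ)
    (hA : ∀ k j, A k j = m j (θ k))
    (ε : ℝ)
    (happrox : ∀ j, ∃ qpoly : Polynomial ℂ, qpoly.degree ≤ ℓ ∧
      ∀ x ∈ Set.Icc (-1 : ℝ) 1, ‖m j x - qpoly.eval (x : ℂ)‖ ≤ ε) :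
    ∃ B : Matrix (Fin p) (Fin q) ℂ, B.rank ≤ ℓ + 1 ∧
      (∀ k j, ‖A k j - B k j‖ ≤ ε) ∧
      Real.sqrt (∑ k, ∑ j, ‖A k j - B k j‖ ^ 2) ≤
        ε * Real.sqrt (p * q) := by
  choose P hdeg herr using happrox
  have hentry : ∀ k j, ‖A k j - (P j).eval (θ k : ℂ)‖ ≤ ε := fun k j => by
    rw [hA]
    exact herr j (θ k) (hθ k)
  refine ⟨Matrix.of fun k j => (P j).eval (θ k : ℂ), Matrix.rank_of_eval_le _ P hdeg, hentry, ?_⟩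
  simpa using Real.sqrt_sum_sum_norm_sq_le _ hentry
end
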